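/- arXiv:2007.00078 — 2 statements merged into one kernel-verified Lean document; each statement's English description precedes it below -/
import Mathlib

section
/- There exists a constant c > 0 such that for all x ∈ ℝ, |x|^{2m} ⟨x⟩^{-2m-3} ≤ c·arctan(x)·x^{2m-1}·(1+x^{2m})^{-1/m-1} whenever x ≥ 0, and the function arctan(x)·x^{2m-1}·(1+x^{2m})^{-1/m-1} is nonnegative on all of ℝ. -/
/-!
For `x ≥ 0`, `sin (arctan x) = x / ⟨x⟩` and `sin θ ≤ θ` give `arctan x ≥ x ⟨x⟩⁻¹`, while
`1 + t^m ≤ (1 + t)^m` at `t = x²` gives `(1 + x^{2m})^{1/m} ≤ ⟨x⟩²`. Multiplying the two bounds,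
the right-hand side with `c = 1` is at least `x^{2m} ⟨x⟩^{-1-2(m+1)}`, which is exactly the left-hand
side. Nonnegativity holds because `arctan x` has the sign of `x`, hence of the odd power `x^{2m-1}`.
-/

open Real

lemma mul_one_add_sq_rpow_neg_half_le_arctan {x : ℝ} (hx : 0 ≤ x) :
    x * (1 + x ^ 2) ^ (-(1 / 2) : ℝ) ≤ arctan x := by
  rw [rpow_neg (by positivity), ← sqrt_eq_rpow, ← div_eq_mul_inv, ← sin_arctan]
  exact sin_le (arctan_nonneg.2 hx)

lemma arctan_mul_pow_nonneg {n : ℕ} (hn : Odd n) (x : ℝ) : 0 ≤ arctan x * x ^ n := by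
  obtain ⟨k, rfl⟩ := hn
  have hsign : 0 ≤ arctan x * x := by
    rcases le_total 0 x with hx | hx
    · exact mul_nonneg (arctan_nonneg.2 hx) hx
    · exact mul_nonneg_of_nonpos_of_nonpos (arctan_le_zero.2 hx) hx
  calc 0 ≤ arctan x * x * (x ^ k) ^ 2 := by positivity
    _ = arctan x * x ^ (2 * k + 1) := by ring

lemma one_add_pow_rpow_inv_le {t : ℝ} (ht : 0 ≤ t) {n : ℕ} (hn : n ≠ 0) :
    (1 + t ^ n) ^ (n⁻¹ : ℝ) ≤ 1 + t := by
  rw [rpow_inv_le_iff_of_pos (by positivity) (by positivity) (by positivity), rpow_natCast]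
  simpa using pow_add_pow_le zero_le_one ht hn

lemma one_add_rpow_le_one_add_pow_rpow {t : ℝ} (ht : 0 ≤ t) {n : ℕ} (hn : n ≠ 0) :
    (1 + t) ^ (-(n : ℝ) - 1) ≤ (1 + t ^ n) ^ (-(1 : ℝ) / n - 1) := by
  have hn' : (n : ℝ) ≠ 0 := Nat.cast_ne_zero.2 hn
  calc (1 + t) ^ (-(n : ℝ) - 1)
      ≤ ((1 + t ^ n) ^ (n⁻¹ : ℝ)) ^ (-(n : ℝ) - 1) :=
        rpow_le_rpow_of_nonpos (by positivity) (one_add_pow_rpow_inv_le ht hn) (by linarith [(n.cast_nonneg : (0 : ℝ) ≤ n)])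
    _ = (1 + t ^ n) ^ (-(1 : ℝ) / n - 1) := by
        rw [← rpow_mul (by positivity)]
        congr 1
        field_simp
        ring

/-- There exists `c > 0` such that for `x ≥ 0`,
`|x|^{2m}⟨x⟩^{-2m-3} ≤ c · arctan(x) · x^{2m-1} · (1+x^{2m})^{-1/m-1}`, and the function
`arctan(x) · x^{2m-1} · (1+x^{2m})^{-1/m-1}` is nonnegative on all of `ℝ`. -/
theorem weight_comparison (m : ℕ) (hm : 2 ≤ m) :
    ∃ c > 0,
      (∀ x : ℝ, 0 ≤ x →
        |x| ^ (2 * m) * (1 + x ^ 2) ^ ((-(2 * (m:ℝ)) - 3) / 2)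
          ≤ c * (Real.arctan x * x ^ (2 * m - 1)
              * (1 + x ^ (2 * m)) ^ (-(1:ℝ) / m - 1))) ∧
      (∀ x : ℝ, 0 ≤ Real.arctan x * x ^ (2 * m - 1)
          * (1 + x ^ (2 * m)) ^ (-(1:ℝ) / m - 1)) := by
  have hodd : Odd (2 * m - 1) := ⟨m - 1, by omega⟩
  refine ⟨1, one_pos, fun x hx => ?_, fun x => ?_⟩
  · have hA : 0 < 1 + x ^ 2 := by positivity
    rw [abs_of_nonneg hx, one_mul, pow_mul]
    calc (x ^ 2) ^ m * (1 + x ^ 2) ^ ((-(2 * (m:ℝ)) - 3) / 2)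
        = (x * (1 + x ^ 2) ^ (-(1 / 2) : ℝ)) * x ^ (2 * m - 1)
            * (1 + x ^ 2) ^ (-(m : ℝ) - 1) := by
          have hpow : (x ^ 2) ^ m = x * x ^ (2 * m - 1) := by
            rw [← pow_mul, ← pow_succ', Nat.sub_add_cancel (by omega)]
          have hrpow : (1 + x ^ 2) ^ ((-(2 * (m:ℝ)) - 3) / 2)
              = (1 + x ^ 2) ^ (-(1 / 2) : ℝ) * (1 + x ^ 2) ^ (-(m : ℝ) - 1) := by
            rw [← rpow_add hA]
            ring_nf
          rw [hpow, hrpow]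
          ring
      _ ≤ arctan x * x ^ (2 * m - 1) * (1 + (x ^ 2) ^ m) ^ (-(1:ℝ) / m - 1) := by
          gcongr ?_ * _ * ?_
          · exact mul_one_add_sq_rpow_neg_half_le_arctan hx
          · exact one_add_rpow_le_one_add_pow_rpow (sq_nonneg x) (by omega)
  · have hB : 0 ≤ 1 + x ^ (2 * m) := by rw [pow_mul]; positivity
    exact mul_nonneg (arctan_mul_pow_nonneg hodd x) (rpow_nonneg hB _)
end

section
/- For any Schwartz function u on ℝ and any real η with |η| ≥ 1, ∫ (|∂ₓu|² + η² x^{2m} |u|²) dx ≥ c |η|^{2/(m+1)} ∫ |u|² dx, where c > 0 depends only on m (c is the bottom of the spectrum of -∂²ₓ + x^{2m}). -/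
/-!
For any bounded weight `w` with bounded derivative, expanding a square and integrating the exact
derivative `(w u²)'` away gives
`∫ u'² + V u² = ∫ (u' + w u)² + (w' - w² + V) u² ≥ c ∫ u²` whenever `c ≤ w' - w² + V`.
With `w = arctan / 16` the Riccati expression `w' - w² + y^{2m}` is at least `1/64` everywhere:
`w'` dominates near `0` and `y^{2m}` away from it. Rescaling `w` to `s w(s x)` with
`s^{m+1} = |η|` turns `η² x^{2m}` into `s² (s x)^{2m}`, so the bound becomes `s²/64`.
-/

open MeasureTheory Real
open scoped SchwartzMap

lemma one_div_sixtyFour_le_arctan_riccati (m : ℕ) (y : ℝ) :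
    1 / 64 ≤ 1 / (16 * (1 + y ^ 2)) - (arctan y / 16) ^ 2 + y ^ (2 * m) := by
  have harctan : (arctan y / 16) ^ 2 ≤ 1 / 64 := by
    obtain ⟨hlo, hhi⟩ := arctan_mem_Ioo y
    rw [div_pow, div_le_iff₀ (by norm_num)]
    nlinarith [pi_le_four]
  rcases le_total (y ^ 2) 1 with hy | hy
  · have : 1 / 32 ≤ 1 / (16 * (1 + y ^ 2)) := by
      rw [div_le_div_iff₀ (by norm_num) (by positivity)]
      linarith
    have : 0 ≤ y ^ (2 * m) := (even_two_mul m).pow_nonneg y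
    linarith
  · have : 1 ≤ y ^ (2 * m) := by
      rw [pow_mul]
      exact one_le_pow₀ hy
    have : 0 ≤ 1 / (16 * (1 + y ^ 2)) := by positivity
    linarith

namespace SchwartzMap

variable (u v : 𝓢(ℝ, ℝ))

lemma integrable_mul : Integrable fun x => u x * v x :=
  v.integrable.mul_of_top_right u.memLp_top

lemma integrable_pow_mul_sq (k : ℕ) : Integrable fun x => x ^ k * u x ^ 2 := by
  refine ((u.integrable_pow_mul volume k).mul_of_top_right u.memLp_top.norm).mono'
    (by fun_prop) (ae_of_all _ fun x => le_of_eq ?_)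
  simp only [Pi.mul_apply, norm_mul, norm_pow]
  ring

lemma hasDerivAt_derivCLM (x : ℝ) : HasDerivAt u (derivCLM ℝ ℝ u x) x :=
  u.differentiableAt.hasDerivAt

theorem mul_integral_sq_le_of_riccati {w w' V : ℝ → ℝ} {A B c : ℝ}
    (hw : ∀ x, HasDerivAt w (w' x) x) (hwA : ∀ x, ‖w x‖ ≤ A) (hw'B : ∀ x, ‖w' x‖ ≤ B)
    (hV : Integrable fun x => V x * u x ^ 2) (hc : ∀ x, c ≤ w' x - w x ^ 2 + V x) :
    c * ∫ x, u x ^ 2 ≤ ∫ x, deriv u x ^ 2 + V x * u x ^ 2 := by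
  set u' := derivCLM ℝ ℝ u
  have hw_meas : AEStronglyMeasurable w :=
    (continuous_iff_continuousAt.2 fun x => (hw x).continuousAt).aestronglyMeasurable
  have hw'_meas : AEStronglyMeasurable w' := by
    rw [show w' = deriv w from funext fun x => (hw x).deriv.symm]
    exact (measurable_deriv w).aestronglyMeasurable
  have hu2 : Integrable fun x => u x ^ 2 := (u.memLp 2).integrable_sq
  set D := fun x => w' x * u x ^ 2 + w x * (2 * (u x * u' x))
  have hD_deriv : ∀ x, HasDerivAt (fun x => w x * u x ^ 2) (D x) x := fun x => by
    refine ((hw x).mul ((u.hasDerivAt_derivCLM x).pow 2)).congr_deriv ?_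
    simp only [D, Pi.pow_apply]
    ring
  have hD : Integrable D :=
    (hu2.bdd_mul hw'_meas (ae_of_all _ hw'B)).add
      (((u.integrable_mul u').const_mul 2).bdd_mul hw_meas (ae_of_all _ hwA))
  have hD_zero : ∫ x, D x = 0 :=
    integral_eq_zero_of_hasDerivAt_of_integrable hD_deriv hD
      (hu2.bdd_mul hw_meas (ae_of_all _ hwA))
  have hF : Integrable fun x => u' x ^ 2 + V x * u x ^ 2 := (u'.memLp 2).integrable_sq.add hV
  have hpointwise : ∀ x, c * u x ^ 2 ≤ (u' x ^ 2 + V x * u x ^ 2) + D x := fun x => by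
    nlinarith [sq_nonneg (u' x + w x * u x), mul_le_mul_of_nonneg_right (hc x) (sq_nonneg (u x))]
  calc c * ∫ x, u x ^ 2 = ∫ x, c * u x ^ 2 := (integral_const_mul _ _).symm
    _ ≤ ∫ x, (u' x ^ 2 + V x * u x ^ 2) + D x :=
        integral_mono (hu2.const_mul c) (hF.add hD) hpointwise
    _ = ∫ x, deriv u x ^ 2 + V x * u x ^ 2 := by rw [integral_add hF hD, hD_zero, add_zero]; rfl

theorem mul_integral_sq_le_integral_deriv_sq_add_pow_mul_sq (m : ℕ) (s : ℝ) :
    s ^ 2 / 64 * ∫ x, u x ^ 2 ≤ ∫ x, deriv u x ^ 2 + s ^ (2 * m + 2) * x ^ (2 * m) * u x ^ 2 := by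
  have hw : ∀ x, HasDerivAt (fun x => s * (arctan (s * x) / 16))
      (s ^ 2 * (1 / (16 * (1 + (s * x) ^ 2)))) x := fun x => by
    refine ((((hasDerivAt_arctan (s * x)).comp x ((hasDerivAt_id x).const_mul s)).div_const
      16).const_mul s).congr_deriv ?_
    field_simp
  refine u.mul_integral_sq_le_of_riccati hw (A := |s|) (B := s ^ 2) (fun x => ?_) (fun x => ?_)
    (by simpa only [mul_assoc] using (u.integrable_pow_mul_sq (2 * m)).const_mul (s ^ (2 * m + 2)))
    (fun x => ?_)
  · have harctan : ‖arctan (s * x) / 16‖ ≤ 1 := by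
      obtain ⟨hlo, hhi⟩ := arctan_mem_Ioo (s * x)
      rw [Real.norm_eq_abs, abs_le]
      constructor <;> linarith [pi_le_four]
    rw [norm_mul, Real.norm_eq_abs]
    exact mul_le_of_le_one_right (abs_nonneg s) harctan
  · have hweight : ‖1 / (16 * (1 + (s * x) ^ 2))‖ ≤ 1 := by
      rw [Real.norm_of_nonneg (by positivity), div_le_one (by positivity)]
      nlinarith [sq_nonneg (s * x)]
    rw [norm_mul, norm_pow, Real.norm_eq_abs, sq_abs]
    exact mul_le_of_le_one_right (sq_nonneg s) hweight
  · calc s ^ 2 / 64 = s ^ 2 * (1 / 64) := by ring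
      _ ≤ s ^ 2 * (1 / (16 * (1 + (s * x) ^ 2)) - (arctan (s * x) / 16) ^ 2
            + (s * x) ^ (2 * m)) :=
        mul_le_mul_of_nonneg_left (one_div_sixtyFour_le_arctan_riccati m (s * x)) (sq_nonneg s)
      _ = _ := by ring

end SchwartzMap

theorem rescaled_anharmonic_bound_general (m : ℕ) :
    ∃ c > (0:ℝ), ∀ (u : SchwartzMap ℝ ℝ) (η : ℝ), 1 ≤ |η| →
      c * |η| ^ ((2:ℝ) / (m + 1)) * ∫ x : ℝ, (u x) ^ 2
        ≤ ∫ x : ℝ, (deriv (fun y : ℝ => u y) x) ^ 2 + η ^ 2 * x ^ (2 * m) * (u x) ^ 2 := by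
  refine ⟨1 / 64, by norm_num, fun u η _ => ?_⟩
  set s := |η| ^ ((1 : ℝ) / (m + 1))
  have hs_pow (k : ℕ) : s ^ k = |η| ^ ((k : ℝ) / (m + 1)) := by
    rw [← Real.rpow_natCast, ← Real.rpow_mul (abs_nonneg η), one_div_mul_eq_div]
  have hs_sq : s ^ 2 = |η| ^ ((2 : ℝ) / (m + 1)) := by exact_mod_cast hs_pow 2
  have hs_top : s ^ (2 * m + 2) = η ^ 2 := by
    rw [hs_pow, show ((2 * m + 2 : ℕ) : ℝ) / (m + 1) = 2 by push_cast; field_simp,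
      Real.rpow_two, sq_abs]
  calc 1 / 64 * |η| ^ ((2 : ℝ) / (m + 1)) * ∫ x, u x ^ 2 = s ^ 2 / 64 * ∫ x, u x ^ 2 := by
        rw [hs_sq]; ring
    _ ≤ ∫ x, deriv u x ^ 2 + s ^ (2 * m + 2) * x ^ (2 * m) * u x ^ 2 :=
        u.mul_integral_sq_le_integral_deriv_sq_add_pow_mul_sq m s
    _ = _ := by rw [hs_top]

/-- Rescaled anharmonic oscillator lower bound: for Schwartz `u` and `|η| ≥ 1`,
`∫ (|∂ₓu|² + η²x^{2m}|u|²) ≥ c |η|^{2/(m+1)} ∫ |u|²`. -/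
theorem rescaled_anharmonic_bound (m : ℕ) (hm : 2 ≤ m) :
    ∃ c > (0:ℝ), ∀ (u : SchwartzMap ℝ ℝ) (η : ℝ), 1 ≤ |η| →
      c * |η| ^ ((2:ℝ) / (m + 1)) * ∫ x : ℝ, (u x) ^ 2
        ≤ ∫ x : ℝ, (deriv (fun y : ℝ => u y) x) ^ 2 + η ^ 2 * x ^ (2 * m) * (u x) ^ 2 :=
  rescaled_anharmonic_bound_general m
end
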